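/- Let m ≥ 2. Let C_{m+1} and C_{m−1} be the ℤ/2-vector spaces with bases the (m+1)-element subsets and the (m−1)-element subsets, respectively, of {1, …, 2m}, and let ∂_{m+1} : C_{m+1} → C_{m−1} be the ℤ/2-linear map sending each (m+1)-element subset Δ to the sum of all (m−1)-element subsets of Δ. Then dim_{ℤ/2} ker(∂_{m+1}) = C(2m, m+1) − Σ_{i=0}^{m−1} 2^{m−1−i}·C(2i, i). -/

import Mathlib

open CategoryTheory AlgebraicTopology Finset

noncomputable section

/-- The singular chain complex functor with coefficients in a commutative ring `R`:
the free `R`-module functor applied levelwise to the singular simplicial set, followed by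
the alternating face map complex. -/
def singularChainComplex (R : Type) [CommRing R] : TopCat ⥤ ChainComplex (ModuleCat R) ℕ :=
  TopCat.toSSet ⋙ ((SimplicialObject.whiskering _ _).obj (ModuleCat.free R)) ⋙
    alternatingFaceMapComplex _

/-- Singular homology with coefficients in `R`, as a functor `TopCat ⥤ ModuleCat R`. -/
def SH (R : Type) [CommRing R] (q : ℕ) : TopCat ⥤ ModuleCat R :=
  singularChainComplex R ⋙ HomologicalComplex.homologyFunctor _ _ q

/-- View a morphism of `ModuleCat R` as a linear map. -/
def homToLinear {R : Type} [CommRing R] {M N : ModuleCat R} (f : M ⟶ N) : M →ₗ[R] N where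
  toFun := f.hom
  map_add' := map_add f.hom
  map_smul' := map_smul f.hom

/-- `D_n = C(n-1, m-1)` for `n = 2m+1`. -/
def Dnum (m : ℕ) : ℕ := (2*m).choose (m-1)

/-- `α_n = ∑_{i=0}^{m-1} 2^{m-1-i} C(2i, i)` for `n = 2m+1`. -/
def alphaNum (m : ℕ) : ℕ := ∑ i ∈ Finset.range m, 2^(m-1-i) * (2*i).choose i

/-- `β_n = D_n - α_n`. -/
def betaNum (m : ℕ) : ℕ := Dnum m - alphaNum m

/-- The linear map `(ι → ℤ/2) →ₗ M` sending `ξ` to `∑ i, ξ i • v i`. -/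
def lcomb {ι : Type} [Fintype ι] {M : Type} [AddCommMonoid M] [Module (ZMod 2) M]
    (v : ι → M) : (ι → ZMod 2) →ₗ[ZMod 2] M where
  toFun ξ := ∑ i, ξ i • v i
  map_add' ξ η := by simp [add_smul, Finset.sum_add_distrib]
  map_smul' c ξ := by simp [Finset.smul_sum, smul_smul]

/-! Over `𝔽₂`, let `∂ : C_k → C_{k-2}` send a `k`-subset of a `2m`-set to the sum of its
`(k-2)`-subsets. Then `∂∂ = 0`, since a pair `T ⊆ S` with `|S \ T| = 4` is counted `C(4,2) = 6`
times, and when `k + m` is odd the transposes form a contracting homotopy,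
`∂ᵀ∂ + ∂∂ᵀ = 1` on `C_k`: the diagonal entry `C(k,2) + C(2m-k,2)` is odd, and the off-diagonal
ones are `2m - 2`, `2` or `0`. So the complex is exact in the degrees `m+1, m+3, …`, where
rank–nullity gives `rk ∂_k + rk ∂_{k+2} = C(2m,k)`. Telescoping,
`rk ∂_{m+1} = ∑_t (-1)^t C(2m, m+1+2t)`, and by Pascal's rule this alternating sum obeys the
recursion `α(m+1) = 2α(m) + C(2m,m)` of `alphaNum`. -/

open Matrix

theorem sum_boole_mul_boole {R ι : Type*} [Semiring R] [Fintype ι] (p q : ι → Prop)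
    [DecidablePred p] [DecidablePred q] :
    ∑ i, (if p i then (1 : R) else 0) * (if q i then 1 else 0) = #{i | p i ∧ q i} := by
  simp only [ite_zero_mul_ite_zero, mul_one, sum_boole]

theorem Matrix.ker_mulVecLin_eq_range_of_homotopy {R l m p : Type*} [CommSemiring R]
    [Fintype l] [Fintype m] [Fintype p] [DecidableEq m] {A : Matrix l m R} {B : Matrix m p R}
    {G : Matrix m l R} {H : Matrix p m R}
    (hAB : A * B = 0) (hom : G * A + B * H = 1) :
    LinearMap.ker A.mulVecLin = LinearMap.range B.mulVecLin := by
  apply le_antisymm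
  · intro x hx
    refine ⟨H *ᵥ x, ?_⟩
    have := congrArg (· *ᵥ x) hom
    simp only [add_mulVec, ← mulVec_mulVec, one_mulVec] at this
    rw [LinearMap.mem_ker, mulVecLin_apply] at hx
    simpa only [hx, mulVec_zero, zero_add, mulVecLin_apply] using this
  · rintro _ ⟨y, rfl⟩
    rw [LinearMap.mem_ker, mulVecLin_apply, mulVecLin_apply, mulVec_mulVec, hAB, zero_mulVec]

theorem Matrix.rank_add_rank_of_ker_eq_range {K l m p : Type*} [Field K] [Fintype m] [Fintype p]
    {A : Matrix l m K} {B : Matrix m p K}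
    (h : LinearMap.ker A.mulVecLin = LinearMap.range B.mulVecLin) :
    A.rank + B.rank = Fintype.card m := by
  rw [← Module.finrank_fintype_fun_eq_card K,
    ← LinearMap.finrank_range_add_finrank_ker A.mulVecLin, h]
  rfl

theorem sum_range_neg_one_pow_mul_of_add_succ {R : Type*} [CommRing R] {f g : ℕ → R}
    (h : ∀ t, f t + f (t + 1) = g t) (J : ℕ) :
    ∑ t ∈ range J, (-1) ^ t * g t = f 0 - (-1) ^ J * f J := by
  induction J with
  | zero => simp
  | succ J ih =>
    rw [sum_range_succ, ih, ← h J, pow_succ]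
    ring

abbrev KSubset (α : Type*) (k : ℕ) : Type _ := {S : Finset α // S.card = k}

/-- `(inclusionMatrix R α b a).mulVecLin` sends an `a`-subset to the sum of its `b`-subsets. -/
def inclusionMatrix (R α : Type*) [Semiring R] [DecidableEq α] (b a : ℕ) :
    Matrix (KSubset α b) (KSubset α a) R :=
  Matrix.of fun T S => if T.1 ⊆ S.1 then 1 else 0

variable {α : Type*} [DecidableEq α]

theorem KSubset.eq_iff_card_inter {k : ℕ} {S T : KSubset α k} : S = T ↔ #(S.1 ∩ T.1) = k := by
  refine ⟨fun h => h ▸ (inter_self S.1).symm ▸ S.2, fun h => Subtype.ext ?_⟩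
  have hST : S.1 ⊆ T.1 := inter_eq_left.mp (eq_of_subset_of_card_le inter_subset_left (by omega))
  exact eq_of_subset_of_card_le hST (by omega)

variable [Fintype α]

theorem card_kSubset_between {A B : Finset α} (hAB : A ⊆ B) {b : ℕ} (hA : #A ≤ b) :
    #{T : KSubset α b | A ⊆ T.1 ∧ T.1 ⊆ B} = (#B - #A).choose (b - #A) := by
  rw [← card_sdiff_of_subset hAB, ← card_powersetCard]
  refine card_bij' (fun T _ => T.1 \ A) (fun C hC => ⟨C ∪ A, ?_⟩) ?_ ?_ ?_ ?_
  · rw [mem_powersetCard] at hC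
    rw [card_union_of_disjoint (disjoint_of_subset_left hC.1 sdiff_disjoint), hC.2]
    omega
  · intro T hT
    simp only [mem_filter, mem_univ, true_and] at hT
    rw [mem_powersetCard, card_sdiff_of_subset hT.1, T.2]
    exact ⟨sdiff_subset_sdiff hT.2 le_rfl, rfl⟩
  · intro C hC
    rw [mem_powersetCard] at hC
    simp only [mem_filter, mem_univ, true_and]
    exact ⟨subset_union_right, union_subset (hC.1.trans sdiff_subset) hAB⟩
  · intro T hT
    simp only [mem_filter, mem_univ, true_and] at hT
    exact Subtype.ext (sdiff_union_of_subset hT.1)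
  · intro C hC
    rw [mem_powersetCard] at hC
    exact union_sdiff_cancel_right (disjoint_of_subset_left hC.1 sdiff_disjoint)

theorem card_kSubset_subset (B : Finset α) {c : ℕ} :
    #{C : KSubset α c | C.1 ⊆ B} = (#B).choose c := by
  simpa using card_kSubset_between (empty_subset B) (Nat.zero_le c)

theorem card_kSubset_superset {A : Finset α} {d : ℕ} (hA : #A ≤ d) :
    #{D : KSubset α d | A ⊆ D.1} = (Fintype.card α - #A).choose (d - #A) := by
  simpa using card_kSubset_between (subset_univ A) hA

theorem card_kSubset_superset_of_lt {A : Finset α} {d : ℕ} (hA : d < #A) :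
    #{D : KSubset α d | A ⊆ D.1} = 0 := by
  rw [card_eq_zero, filter_eq_empty_iff]
  exact fun D _ hD => absurd (card_le_card hD) (by rw [D.2]; omega)

variable {R : Type*} [Semiring R]

theorem inclusionMatrix_mul_apply {a b c : ℕ} (T : KSubset α c) (S : KSubset α a) :
    (inclusionMatrix R α c b * inclusionMatrix R α b a) T S =
      #{B : KSubset α b | T.1 ⊆ B.1 ∧ B.1 ⊆ S.1} :=
  sum_boole_mul_boole _ _

theorem inclusionMatrix_mul_inclusionMatrix {a b c : ℕ} (hcb : c ≤ b) :
    inclusionMatrix R α c b * inclusionMatrix R α b a =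
      ((a - c).choose (b - c) : R) • inclusionMatrix R α c a := by
  ext T S
  rw [inclusionMatrix_mul_apply, Matrix.smul_apply, inclusionMatrix, of_apply, smul_eq_mul]
  split_ifs with hTS
  · rw [card_kSubset_between hTS (T.2.le.trans hcb), S.2, T.2, mul_one]
  · rw [filter_eq_empty_iff.mpr fun B _ hB => hTS (hB.1.trans hB.2), card_empty, Nat.cast_zero,
      mul_zero]

theorem transpose_inclusionMatrix_mul_apply {c k : ℕ} (S Γ : KSubset α k) :
    ((inclusionMatrix R α c k)ᵀ * inclusionMatrix R α c k) S Γ = (#(S.1 ∩ Γ.1)).choose c := by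
  rw [← card_kSubset_subset]
  simp only [subset_inter_iff]
  exact sum_boole_mul_boole _ _

theorem inclusionMatrix_mul_transpose_apply {k d : ℕ} (S Γ : KSubset α k) :
    (inclusionMatrix R α k d * (inclusionMatrix R α k d)ᵀ) S Γ =
      #{D : KSubset α d | S.1 ∪ Γ.1 ⊆ D.1} := by
  simp only [union_subset_iff]
  exact sum_boole_mul_boole _ _

theorem Nat.odd_choose_two_iff (j : ℕ) : Odd (j.choose 2) ↔ j % 4 = 2 ∨ j % 4 = 3 := by
  induction j with
  | zero => simp
  | succ n ih =>
    have h : (n + 1).choose 2 = n.choose 1 + n.choose 2 := Nat.choose_succ_succ' n 1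
    rw [h, Nat.choose_one_right, Nat.odd_iff]
    rw [Nat.odd_iff] at ih
    omega

theorem Nat.odd_choose_two_add_choose_two {x y m : ℕ} (hxy : x + y = 2 * m) (hx : Odd (x + m)) :
    Odd (x.choose 2 + y.choose 2) := by
  rw [Nat.odd_iff] at hx
  rw [Nat.odd_add, ← Nat.not_odd_iff_even, Nat.odd_choose_two_iff, Nat.odd_choose_two_iff]
  rcases Nat.even_or_odd' m with ⟨n, rfl | rfl⟩ <;> omega

/-- With `i = #(S ∩ T)` and `u = #(S ∪ T)`, this is the parity of the `(S, T)` entry of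
`∂ᵀ∂ + ∂∂ᵀ` on `k`-chains. -/
theorem odd_choose_add_choose_iff {m c k d i u : ℕ} (hc : c + 2 = k) (hd : k + 2 = d)
    (hpar : Odd (k + m)) (hiu : u + i = 2 * k) (hi : i ≤ k) (hu : u ≤ 2 * m) (hud : u ≤ d) :
    Odd (i.choose c + (2 * m - u).choose (d - u)) ↔ i = k := by
  subst hc hd
  obtain rfl | rfl | rfl : c = i ∨ c + 1 = i ∨ c + 2 = i := by omega
  · obtain rfl : u = c + 4 := by omega
    simp only [Nat.choose_self, Nat.sub_self, Nat.choose_zero_right]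
    exact iff_of_false (by decide) (by omega)
  · obtain rfl : u = c + 3 := by omega
    rw [Nat.choose_succ_self_right, show c + 2 + 2 - (c + 3) = 1 by omega, Nat.choose_one_right]
    refine iff_of_false ?_ (by omega)
    rw [Nat.not_odd_iff_even]
    exact ⟨m - 1, by omega⟩
  · obtain rfl : u = c + 2 := by omega
    rw [Nat.choose_symm_add, show c + 2 + 2 - (c + 2) = 2 by omega]
    exact iff_of_true (Nat.odd_choose_two_add_choose_two (by omega) hpar) rfl

theorem inclusionMatrix_mul_inclusionMatrix_eq_zero {c k d : ℕ} (hc : c + 2 = k) (hd : k + 2 = d) :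
    inclusionMatrix (ZMod 2) α c k * inclusionMatrix (ZMod 2) α k d = 0 := by
  rw [inclusionMatrix_mul_inclusionMatrix (by omega), show d - c = 4 by omega,
    show k - c = 2 by omega]
  exact zero_smul _ _

theorem transpose_mul_add_mul_transpose_inclusionMatrix {m c k d : ℕ}
    (hα : Fintype.card α = 2 * m) (hc : c + 2 = k) (hd : k + 2 = d) (hpar : Odd (k + m)) :
    (inclusionMatrix (ZMod 2) α c k)ᵀ * inclusionMatrix (ZMod 2) α c k +
      inclusionMatrix (ZMod 2) α k d * (inclusionMatrix (ZMod 2) α k d)ᵀ = 1 := by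
  ext S T
  rw [Matrix.add_apply, transpose_inclusionMatrix_mul_apply, inclusionMatrix_mul_transpose_apply,
    one_apply]
  have hiu : #(S.1 ∪ T.1) + #(S.1 ∩ T.1) = 2 * k := by
    rw [card_union_add_card_inter, S.2, T.2, two_mul]
  have hi : #(S.1 ∩ T.1) ≤ k := (card_le_card inter_subset_left).trans_eq S.2
  have hu : #(S.1 ∪ T.1) ≤ 2 * m := hα ▸ card_le_univ _
  rcases le_or_gt #(S.1 ∪ T.1) d with hud | hud
  · have key := odd_choose_add_choose_iff hc hd hpar hiu hi hu hud
    rw [card_kSubset_superset hud, hα, ← Nat.cast_add]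
    split_ifs with h <;> rw [KSubset.eq_iff_card_inter] at h
    · exact ZMod.natCast_eq_one_iff_odd.mpr (key.mpr h)
    · exact ZMod.natCast_eq_zero_iff_even.mpr (Nat.not_odd_iff_even.mp (mt key.mp h))
  · rw [card_kSubset_superset_of_lt hud, Nat.choose_eq_zero_of_lt (by omega),
      if_neg (mt KSubset.eq_iff_card_inter.mp (by omega))]
    simp

theorem rank_inclusionMatrix_add_rank {m c k d : ℕ} (hα : Fintype.card α = 2 * m)
    (hc : c + 2 = k) (hd : k + 2 = d) (hpar : Odd (k + m)) :
    (inclusionMatrix (ZMod 2) α c k).rank + (inclusionMatrix (ZMod 2) α k d).rank =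
      (2 * m).choose k := by
  rw [Matrix.rank_add_rank_of_ker_eq_range (Matrix.ker_mulVecLin_eq_range_of_homotopy
    (inclusionMatrix_mul_inclusionMatrix_eq_zero hc hd)
    (transpose_mul_add_mul_transpose_inclusionMatrix hα hc hd hpar)),
    Fintype.card_finset_len, hα]

theorem rank_inclusionMatrix_eq_sum {m : ℕ} (hα : Fintype.card α = 2 * m) (hm : 1 ≤ m) :
    ((inclusionMatrix (ZMod 2) α (m - 1) (m + 1)).rank : ℤ) =
      ∑ t ∈ range m, (-1) ^ t * ((2 * m).choose (m + 1 + 2 * t) : ℤ) := by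
  -- the rank of `∂` on `(m+1+2j)`-chains, indexed so that `r j` and `r (j+1)` share a degree
  set r : ℕ → ℤ := fun j =>
    (inclusionMatrix (ZMod 2) α (m - 1 + 2 * j) (m - 1 + 2 * (j + 1))).rank
  have hrel : ∀ j, r j + r (j + 1) = (2 * m).choose (m + 1 + 2 * j) := by
    intro j
    simp only [r]
    rw [show m + 1 + 2 * j = m - 1 + 2 * (j + 1) by omega]
    exact_mod_cast rank_inclusionMatrix_add_rank (c := m - 1 + 2 * j) (k := m - 1 + 2 * (j + 1))
      (d := m - 1 + 2 * (j + 1 + 1)) hα (by ring) (by ring) ⟨m + j, by omega⟩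
  have hlast : r m = 0 := by
    have := (inclusionMatrix (ZMod 2) α (m - 1 + 2 * m) (m - 1 + 2 * (m + 1))).rank_le_card_width
    rw [Fintype.card_finset_len, hα, Nat.choose_eq_zero_of_lt (by omega)] at this
    simp only [r, Nat.cast_eq_zero]
    exact Nat.le_zero.mp this
  rw [sum_range_neg_one_pow_mul_of_add_succ hrel, hlast, mul_zero, sub_zero]
  simp only [r]
  rw [show m - 1 + 2 * (0 + 1) = m + 1 by omega]
  rfl

theorem alphaNum_succ (m : ℕ) : alphaNum (m + 1) = 2 * alphaNum m + (2 * m).choose m := by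
  rw [alphaNum, alphaNum, sum_range_succ, Nat.add_sub_cancel, Nat.sub_self, pow_zero, one_mul,
    mul_sum]
  congr 1
  refine sum_congr rfl fun i hi => ?_
  rw [← mul_assoc, ← pow_succ', show m - 1 - i + 1 = m - i by have := mem_range.mp hi; omega]

theorem sum_range_neg_one_pow_mul_choose_eq_alphaNum (m : ℕ) :
    ∑ t ∈ range m, (-1) ^ t * ((2 * m).choose (m + 1 + 2 * t) : ℤ) = alphaNum m := by
  induction m with
  | zero => simp [alphaNum]
  | succ m ih =>
    have pascal : ∀ t, ((2 * (m + 1)).choose (m + 1 + 1 + 2 * t) : ℤ) =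
        ((2 * m).choose (m + 2 * t) + (2 * m).choose (m + 2 * (t + 1))) +
          2 * (2 * m).choose (m + 1 + 2 * t) := by
      intro t
      rw [show 2 * (m + 1) = 2 * m + 1 + 1 by ring,
        show m + 1 + 1 + 2 * t = m + 2 * t + 1 + 1 by ring, Nat.choose_succ_succ',
        Nat.choose_succ_succ', Nat.choose_succ_succ']
      push_cast
      ring_nf
    calc ∑ t ∈ range (m + 1), (-1) ^ t * ((2 * (m + 1)).choose (m + 1 + 1 + 2 * t) : ℤ)
        = ∑ t ∈ range (m + 1), (-1) ^ t * (((2 * m).choose (m + 2 * t) : ℤ) +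
              (2 * m).choose (m + 2 * (t + 1))) +
            2 * ∑ t ∈ range (m + 1), (-1) ^ t * ((2 * m).choose (m + 1 + 2 * t) : ℤ) := by
          rw [mul_sum, ← sum_add_distrib]
          exact sum_congr rfl fun t _ => by rw [pascal]; ring
      _ = (2 * m).choose m + 2 * alphaNum m := by
          rw [sum_range_neg_one_pow_mul_of_add_succ (fun _ => rfl), sum_range_succ, ih,
            Nat.choose_eq_zero_of_lt (by omega : 2 * m < m + 2 * (m + 1)),
            Nat.choose_eq_zero_of_lt (by omega : 2 * m < m + 1 + 2 * m)]
          simp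
      _ = alphaNum (m + 1) := by
          rw [alphaNum_succ]
          push_cast
          ring

theorem lcomb_eq_mulVecLin {ι κ : Type} [Fintype ι] (v : ι → κ → ZMod 2) :
    lcomb v = (Matrix.of v)ᵀ.mulVecLin := by
  ext x j
  simp [lcomb, vecMul, dotProduct, mul_comm]

/-- The kernel of the boundary map `∂_{m+1} : C_{m+1} → C_{m-1}` (sending an
`(m+1)`-element subset of `{1, …, 2m}` to the sum of its `(m-1)`-element subsets) has
dimension `C(2m, m+1) - ∑_{i=0}^{m-1} 2^{m-1-i} C(2i, i)` over `ℤ/2`. -/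
theorem statement14 (m : ℕ) (hm : 2 ≤ m) :
    Module.finrank (ZMod 2)
      (LinearMap.ker (lcomb
        (fun Δ : {S : Finset (Fin (2*m)) // S.card = m + 1} =>
          (fun Γ : {S : Finset (Fin (2*m)) // S.card = m - 1} =>
            if Γ.1 ⊆ Δ.1 then (1 : ZMod 2) else 0))))
      = (2*m).choose (m+1) - alphaNum m := by
  have hα : Fintype.card (Fin (2 * m)) = 2 * m := Fintype.card_fin _
  rw [lcomb_eq_mulVecLin]
  change Module.finrank _
    (LinearMap.ker (inclusionMatrix (ZMod 2) (Fin (2 * m)) (m - 1) (m + 1)).mulVecLin) = _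
  have hrank := rank_inclusionMatrix_eq_sum hα (by omega)
  rw [sum_range_neg_one_pow_mul_choose_eq_alphaNum, Nat.cast_inj] at hrank
  have hnullity := LinearMap.finrank_range_add_finrank_ker
    (inclusionMatrix (ZMod 2) (Fin (2 * m)) (m - 1) (m + 1)).mulVecLin
  rw [Module.finrank_fintype_fun_eq_card, Fintype.card_finset_len, hα] at hnullity
  rw [← hnullity, ← hrank]
  exact (Nat.add_sub_cancel_left _ _).symm

end
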